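/- arXiv:2604.11526 — 3 statements merged into one kernel-verified Lean document; each statement's English description precedes it below -/
import Mathlib

section
/- The function f_s is strictly decreasing on the interval (−∞, π²): for all Λ₁ < Λ₂ < π² one has f_s(Λ₁) > f_s(Λ₂). -/
/-!
With `x = √|Λ|`, the branch `fs` is `x ↦ x tanh (x/2)` composed with the decreasing map
`Λ ↦ √(-Λ)` on `(-∞, 0]`, and `x ↦ -x tan (x/2)` composed with the increasing map `Λ ↦ √Λ`
on `[0, π²)`. Both `x tanh (x/2)` (on `x ≥ 0`) and `x tan (x/2)` (on `0 ≤ x < π`) are products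
of nonnegative increasing factors, so `fs` decreases on each piece, and the two pieces meet at
`fs 0 = 0`.
-/

/-- Symmetric eigenvalue branch of the Dirichlet-to-Neumann map of the unit interval. -/
noncomputable def fs (Λ : ℝ) : ℝ :=
  if Λ < 0 then Real.sqrt (-Λ) * Real.tanh (Real.sqrt (-Λ) / 2)
  else if Λ = 0 then 0
  else -Real.sqrt Λ * Real.tan (Real.sqrt Λ / 2)

/-- Antisymmetric eigenvalue branch of the Dirichlet-to-Neumann map of the unit interval. -/
noncomputable def fa (Λ : ℝ) : ℝ :=
  if Λ < 0 then
    Real.sqrt (-Λ) * Real.cosh (Real.sqrt (-Λ) / 2) / Real.sinh (Real.sqrt (-Λ) / 2)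
  else if Λ = 0 then 2
  else Real.sqrt Λ * Real.cos (Real.sqrt Λ / 2) / Real.sin (Real.sqrt Λ / 2)

open Real Set

theorem Real.tanh_strictMono : StrictMono tanh := by
  intro a b hab
  by_contra! h
  have := artanh_le_artanh (neg_one_lt_tanh b) (tanh_lt_one a) h
  rw [artanh_tanh, artanh_tanh] at this
  linarith

theorem Real.tanh_nonneg {x : ℝ} (hx : 0 ≤ x) : 0 ≤ tanh x :=
  tanh_zero ▸ tanh_strictMono.monotone hx

theorem StrictMonoOn.id_mul {M₀ : Type*} [MulZeroClass M₀] [Preorder M₀]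
    [PosMulStrictMono M₀] [MulPosMono M₀] {g : M₀ → M₀} {s : Set M₀}
    (hg : StrictMonoOn g s) (hs : s ⊆ Ici 0) (hg₀ : ∀ x ∈ s, 0 ≤ g x) :
    StrictMonoOn (fun x ↦ x * g x) s :=
  fun _ hx _ hy hxy ↦ mul_lt_mul'' hxy (hg hx hy hxy) (mem_Ici.1 (hs hx)) (hg₀ _ hx)

theorem strictMonoOn_mul_tanh_half : StrictMonoOn (fun x ↦ x * tanh (x / 2)) (Ici 0) :=
  StrictMonoOn.id_mul (fun _ _ _ _ hxy ↦ tanh_strictMono (by linarith)) subset_rfl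
    fun _ hx ↦ tanh_nonneg (by linarith [mem_Ici.1 hx])

theorem strictMonoOn_mul_tan_half : StrictMonoOn (fun x ↦ x * tan (x / 2)) (Ico 0 π) :=
  StrictMonoOn.id_mul
    (fun _ hx _ hy hxy ↦
      tan_lt_tan_of_nonneg_of_lt_pi_div_two (by linarith [hx.1]) (by linarith [hy.2])
        (by linarith))
    Ico_subset_Ici_self
    fun _ hx ↦ tan_nonneg_of_nonneg_of_le_pi_div_two (by linarith [hx.1]) (by linarith [hx.2])

theorem fs_of_nonpos {Λ : ℝ} (hΛ : Λ ≤ 0) : fs Λ = √(-Λ) * tanh (√(-Λ) / 2) := by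
  rcases hΛ.lt_or_eq with hΛ | rfl
  · rw [fs, if_pos hΛ]
  · simp [fs]

theorem fs_of_nonneg {Λ : ℝ} (hΛ : 0 ≤ Λ) : fs Λ = -(√Λ * tan (√Λ / 2)) := by
  rcases hΛ.lt_or_eq with hΛ | rfl
  · rw [fs, if_neg hΛ.not_gt, if_neg hΛ.ne', neg_mul]
  · simp [fs]

theorem strictAntiOn_fs_Iic : StrictAntiOn fs (Iic 0) := by
  have hsqrt : StrictAntiOn (fun Λ ↦ √(-Λ)) (Iic 0) :=
    strictMonoOn_sqrt.comp_strictAntiOn (fun _ _ _ _ h ↦ neg_lt_neg h)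
      fun _ hΛ ↦ mem_Ici.2 (neg_nonneg.2 hΛ)
  exact (strictMonoOn_mul_tanh_half.comp_strictAntiOn hsqrt fun _ _ ↦ sqrt_nonneg _).congr
    fun _ hΛ ↦ (fs_of_nonpos hΛ).symm

theorem strictAntiOn_fs_Ico : StrictAntiOn fs (Ico 0 (π ^ 2)) := by
  have hsqrt : MapsTo (√·) (Ico 0 (π ^ 2)) (Ico 0 π) :=
    fun _ hΛ ↦ ⟨sqrt_nonneg _, (sqrt_lt' pi_pos).2 hΛ.2⟩
  exact (strictMonoOn_mul_tan_half.comp (strictMonoOn_sqrt.mono Ico_subset_Ici_self)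
    hsqrt).neg.congr fun _ hΛ ↦ (fs_of_nonneg hΛ.1).symm

theorem strictAntiOn_fs : StrictAntiOn fs (Iio (π ^ 2)) := by
  have hπ : (0 : ℝ) < π ^ 2 := by positivity
  rw [← Iic_union_Ico_eq_Iio hπ]
  exact strictAntiOn_fs_Iic.union strictAntiOn_fs_Ico isGreatest_Iic (isLeast_Ico hπ)

/-- The symmetric Dirichlet-to-Neumann eigenvalue branch `fs` of the unit interval is
strictly decreasing on `(-∞, π²)`, its first interval of continuity. -/
theorem stmt4 (Λ₁ Λ₂ : ℝ) (h12 : Λ₁ < Λ₂) (h2 : Λ₂ < Real.pi ^ 2) :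
    fs Λ₁ > fs Λ₂ :=
  strictAntiOn_fs (h12.trans h2) h2 h12
end

section
/- The function f_a is strictly decreasing on the interval (−∞, 4π²): for all Λ₁ < Λ₂ < 4π² one has f_a(Λ₁) > f_a(Λ₂). -/
/-!
With `t = √(-Λ)/2` for `Λ < 0` and `s = √Λ/2` for `0 < Λ < 4π²`, `fa Λ` is `2 t coth t`, resp.
`2 s cot s`. The map `t ↦ t coth t` is increasing on `(0, ∞)` with values above `1`, and
`s ↦ s cot s` is decreasing on `(0, π)` with values below `1`: both derivatives have numerator
`sinh t cosh t - t = (sinh 2t - 2t)/2`, resp. `sin s cos s - s = (sin 2s - 2s)/2`. Since `t`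
decreases and `s` increases with `Λ`, `fa` decreases on each side of `0`, where it takes the
value `2` separating the two branches.
-/

open Real Set

lemma self_lt_sinh_mul_cosh {t : ℝ} (ht : 0 < t) : t < sinh t * cosh t := by
  have := self_lt_sinh_iff.2 (by positivity : 0 < 2 * t)
  rw [sinh_two_mul] at this
  linarith

lemma sin_mul_cos_lt_self {s : ℝ} (hs : 0 < s) : sin s * cos s < s := by
  have := sin_lt (by positivity : 0 < 2 * s)
  rw [sin_two_mul] at this
  linarith

lemma strictMonoOn_mul_cosh_div_sinh :
    StrictMonoOn (fun t : ℝ => t * cosh t / sinh t) (Ioi 0) := by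
  have hsinh : ∀ t ∈ Ioi (0 : ℝ), sinh t ≠ 0 := fun t ht => (sinh_pos_iff.2 ht).ne'
  refine strictMonoOn_of_deriv_pos (convex_Ioi 0)
    ((continuous_id.mul continuous_cosh).continuousOn.div continuous_sinh.continuousOn hsinh) ?_
  intro t ht
  rw [interior_Ioi] at ht
  have hd : HasDerivAt (fun t : ℝ => t * cosh t / sinh t)
      (((1 * cosh t + t * sinh t) * sinh t - t * cosh t * cosh t) / sinh t ^ 2) t :=
    ((hasDerivAt_id t).mul (hasDerivAt_cosh t)).div (hasDerivAt_sinh t) (hsinh t ht)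
  rw [hd.deriv]
  have hnum : (1 * cosh t + t * sinh t) * sinh t - t * cosh t * cosh t
      = sinh t * cosh t - t := by
    linear_combination (-t) * cosh_sq_sub_sinh_sq t
  rw [hnum]
  exact div_pos (sub_pos.2 (self_lt_sinh_mul_cosh ht)) (pow_pos (sinh_pos_iff.2 ht) 2)

lemma strictAntiOn_mul_cos_div_sin :
    StrictAntiOn (fun s : ℝ => s * cos s / sin s) (Ioo 0 π) := by
  have hsin : ∀ s ∈ Ioo 0 π, sin s ≠ 0 := fun s hs => (sin_pos_of_pos_of_lt_pi hs.1 hs.2).ne'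
  refine strictAntiOn_of_deriv_neg (convex_Ioo 0 π)
    ((continuous_id.mul continuous_cos).continuousOn.div continuous_sin.continuousOn hsin) ?_
  intro s hs
  rw [interior_Ioo] at hs
  have hd : HasDerivAt (fun s : ℝ => s * cos s / sin s)
      (((1 * cos s + s * -sin s) * sin s - s * cos s * cos s) / sin s ^ 2) s :=
    ((hasDerivAt_id s).mul (hasDerivAt_cos s)).div (hasDerivAt_sin s) (hsin s hs)
  rw [hd.deriv]
  have hnum : (1 * cos s + s * -sin s) * sin s - s * cos s * cos s = sin s * cos s - s := by
    linear_combination (-s) * sin_sq_add_cos_sq s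
  rw [hnum]
  exact div_neg_of_neg_of_pos (sub_neg.2 (sin_mul_cos_lt_self hs.1))
    (pow_pos (sin_pos_of_pos_of_lt_pi hs.1 hs.2) 2)

lemma sinh_lt_mul_cosh {t : ℝ} (ht : 0 < t) : sinh t < t * cosh t := by
  have hmono : StrictMonoOn (fun t : ℝ => t * cosh t - sinh t) (Ici 0) := by
    refine strictMonoOn_of_deriv_pos (convex_Ici 0) (by fun_prop) fun x hx => ?_
    rw [interior_Ici] at hx
    have hd : HasDerivAt (fun t : ℝ => t * cosh t - sinh t) (1 * cosh x + x * sinh x - cosh x) x :=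
      ((hasDerivAt_id x).mul (hasDerivAt_cosh x)).sub (hasDerivAt_sinh x)
    rw [hd.deriv, one_mul, add_sub_cancel_left]
    exact mul_pos hx (sinh_pos_iff.2 hx)
  simpa using hmono self_mem_Ici ht.le ht

lemma one_lt_mul_cosh_div_sinh {t : ℝ} (ht : 0 < t) : 1 < t * cosh t / sinh t := by
  rw [one_lt_div (sinh_pos_iff.2 ht)]
  exact sinh_lt_mul_cosh ht

lemma mul_cos_div_sin_lt_one {s : ℝ} (hs : s ∈ Ioo 0 π) : s * cos s / sin s < 1 := by
  rw [div_lt_one (sin_pos_of_pos_of_lt_pi hs.1 hs.2)]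
  rcases le_or_gt (cos s) 0 with hcos | hcos
  · nlinarith [hs.1, sin_pos_of_pos_of_lt_pi hs.1 hs.2]
  · have hs' : s < π / 2 := by
      by_contra! h
      exact hcos.not_ge (cos_nonpos_of_pi_div_two_le_of_le h (by linarith [hs.2]))
    have := lt_tan hs.1 hs'
    rwa [tan_eq_sin_div_cos, lt_div_iff₀ hcos] at this

lemma fa_of_neg {Λ : ℝ} (h : Λ < 0) :
    fa Λ = 2 * (√(-Λ) / 2 * cosh (√(-Λ) / 2) / sinh (√(-Λ) / 2)) := by
  rw [fa, if_pos h]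
  ring

lemma fa_zero : fa 0 = 2 := by
  simp [fa]

lemma fa_of_pos {Λ : ℝ} (h : 0 < Λ) :
    fa Λ = 2 * (√Λ / 2 * cos (√Λ / 2) / sin (√Λ / 2)) := by
  rw [fa, if_neg h.not_gt, if_neg h.ne']
  ring

lemma sqrt_div_two_mem_Ioo_pi {Λ : ℝ} (h0 : 0 < Λ) (h : Λ < 4 * π ^ 2) : √Λ / 2 ∈ Ioo 0 π := by
  refine ⟨half_pos (sqrt_pos.2 h0), ?_⟩
  rw [div_lt_iff₀ two_pos, sqrt_lt' (by positivity)]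
  linarith

lemma strictAntiOn_fa_Iic : StrictAntiOn fa (Iic 0) := by
  intro x _ y hy hxy
  have hx : 0 < √(-x) / 2 := half_pos (sqrt_pos.2 (by linarith [mem_Iic.1 hy]))
  rw [fa_of_neg (hxy.trans_le hy)]
  rcases (mem_Iic.1 hy).lt_or_eq with hy | rfl
  · have hy' : 0 < √(-y) / 2 := half_pos (sqrt_pos.2 (neg_pos.2 hy))
    have hyx : √(-y) / 2 < √(-x) / 2 := by gcongr; linarith
    rw [fa_of_neg hy]
    linarith [strictMonoOn_mul_cosh_div_sinh hy' hx hyx]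
  · rw [fa_zero]
    linarith [one_lt_mul_cosh_div_sinh hx]

lemma strictAntiOn_fa_Ico : StrictAntiOn fa (Ico 0 (4 * π ^ 2)) := by
  intro x hx y hy hxy
  have hy0 : 0 < y := hx.1.trans_lt hxy
  have hys := sqrt_div_two_mem_Ioo_pi hy0 hy.2
  rw [fa_of_pos hy0]
  rcases hx.1.lt_or_eq with hx0 | rfl
  · have hxy' : √x / 2 < √y / 2 := by gcongr
    rw [fa_of_pos hx0]
    linarith [strictAntiOn_mul_cos_div_sin (sqrt_div_two_mem_Ioo_pi hx0 (hxy.trans hy.2)) hys hxy']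
  · rw [fa_zero]
    linarith [mul_cos_div_sin_lt_one hys]

lemma strictAntiOn_fa : StrictAntiOn fa (Iio (4 * π ^ 2)) := by
  have hpos : (0 : ℝ) < 4 * π ^ 2 := by positivity
  rw [← Iic_union_Ico_eq_Iio hpos]
  exact strictAntiOn_fa_Iic.union strictAntiOn_fa_Ico isGreatest_Iic (isLeast_Ico hpos)

/-- The antisymmetric Dirichlet-to-Neumann eigenvalue branch `fa` of the unit interval is
strictly decreasing on `(-∞, 4π²)`, its first interval of continuity. -/
theorem stmt5 (Λ₁ Λ₂ : ℝ) (h12 : Λ₁ < Λ₂) (h2 : Λ₂ < 4 * Real.pi ^ 2) :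
    fa Λ₁ > fa Λ₂ :=
  strictAntiOn_fa (h12.trans h2) h2 h12
end

section
/- The function f_s is concave on the interval (−∞, π²): for all Λ₁, Λ₂ < π² and all t ∈ [0, 1], f_s(t·Λ₁ + (1−t)·Λ₂) ≥ t·f_s(Λ₁) + (1−t)·f_s(Λ₂). -/
/-!
On each side of `0` the branch is concave by a second-derivative computation. Writing
`fs Λ = u sinh u / (1 + cosh u)` with `u = √(-Λ)` for `Λ ≤ 0`, and `fs Λ = -v sin v / (1 + cos v)`
with `v = √Λ` for `0 ≤ Λ < π²`, the sign of `fs''` reduces to `u ≤ sinh u`, resp. to `sin v ≤ v` and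
`0 ≤ sin v`. The two concave halves glue to a concave function on `(-∞, π²)` because both lie
below the common tangent line `Λ ↦ -Λ / 2` at `0`, which is `tanh y ≤ y` and `y ≤ tan y`.
-/

open Real Set

section Gluing

variable {s : Set ℝ} {f : ℝ → ℝ} {c m : ℝ}

theorem ConcaveOn.mul_add_mul_le_of_le_tangent (hl : ConcaveOn ℝ (s ∩ Iic c) f)
    (hr : ConcaveOn ℝ (s ∩ Ici c) f) (hf : ∀ x ∈ s, f x ≤ f c + m * (x - c)) {x y a b : ℝ}
    (hx : x ∈ s) (hy : y ∈ s) (hc : c ∈ s) (hb : 0 ≤ b) (hab : a + b = 1)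
    (hxy : (x - c) * (y - c) < 0) (hz : 0 ≤ (a * x + b * y - c) * (x - c)) :
    a * f x + b * f y ≤ f (a * x + b * y) := by
  have hxc : x - c ≠ 0 := left_ne_zero_of_mul hxy.ne
  -- Write `a x + b y` as `σ x + (1 - σ) c`, a point of the segment from `x` to `c`; then `σ ≤ a`.
  obtain ⟨σ, hσx⟩ : ∃ σ, σ * (x - c) = a * (x - c) + b * (y - c) :=
    ⟨(a * (x - c) + b * (y - c)) / (x - c), div_mul_cancel₀ _ hxc⟩
  have hσ0 : 0 ≤ σ := by
    refine nonneg_of_mul_nonneg_left ?_ (sq_pos_of_ne_zero hxc)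
    linear_combination hz - (x - c) * hσx + (x - c) * c * hab
  have hσa : σ ≤ a := by
    refine le_of_mul_le_mul_right ?_ (sq_pos_of_ne_zero hxc)
    linear_combination (x - c) * hσx + b * hxy.le
  have hseg : σ * f x + (1 - σ) * f c ≤ f (a * x + b * y) := by
    rw [show a * x + b * y = σ * x + (1 - σ) * c by linear_combination -hσx + c * hab]
    rcases le_total x c with h | h
    · exact hl.2 ⟨hx, h⟩ ⟨hc, le_refl c⟩ hσ0 (by linarith) (by ring)
    · exact hr.2 ⟨hx, h⟩ ⟨hc, le_refl c⟩ hσ0 (by linarith) (by ring)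
  linear_combination hseg + b * hf y hy + (a - σ) * hf x hx - m * hσx + f c * hab

theorem ConcaveOn.of_inter_Iic_of_inter_Ici (hs : Convex ℝ s) (hl : ConcaveOn ℝ (s ∩ Iic c) f)
    (hr : ConcaveOn ℝ (s ∩ Ici c) f) (hf : ∀ x ∈ s, f x ≤ f c + m * (x - c)) :
    ConcaveOn ℝ s f := by
  refine ⟨hs, fun x hx y hy a b ha hb hab => ?_⟩
  simp only [smul_eq_mul]
  wlog hxy : x ≤ y generalizing x y a b
  · rw [add_comm (a * f x), add_comm (a * x)]
    exact this y hy x hx b a hb ha (by linarith) (le_of_not_ge hxy)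
  rcases le_or_gt y c with hyc | hyc
  · exact hl.2 ⟨hx, hxy.trans hyc⟩ ⟨hy, hyc⟩ ha hb hab
  rcases le_or_gt c x with hxc | hxc
  · exact hr.2 ⟨hx, hxc⟩ ⟨hy, hxc.trans hxy⟩ ha hb hab
  have hc : c ∈ s := hs.ordConnected.out hx hy ⟨hxc.le, hyc.le⟩
  rcases le_total (a * x + b * y) c with hz | hz
  · exact hl.mul_add_mul_le_of_le_tangent hr hf hx hy hc hb hab
      (mul_neg_of_neg_of_pos (by linarith) (by linarith))
      (mul_nonneg_of_nonpos_of_nonpos (by linarith) (by linarith))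
  · rw [add_comm (a * f x), add_comm (a * x)]
    exact hl.mul_add_mul_le_of_le_tangent hr hf hy hx hc ha (by linarith)
      (mul_neg_of_pos_of_neg (by linarith) (by linarith))
      (mul_nonneg (by linarith) (by linarith))

end Gluing

theorem Real.tanh_half (x : ℝ) : tanh (x / 2) = sinh x / (1 + cosh x) := by
  have hc := cosh_pos (x / 2)
  rw [tanh_eq_sinh_div_cosh, ← add_halves x, sinh_add, cosh_add, add_halves]
  field_simp
  linear_combination (-sinh (x / 2)) * cosh_sq (x / 2)

theorem Real.tan_half (x : ℝ) : tan (x / 2) = sin x / (1 + cos x) := by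
  obtain ⟨y, rfl⟩ : ∃ y, x = 2 * y := ⟨x / 2, by ring⟩
  rw [mul_div_cancel_left₀ y two_ne_zero, tan_eq_sin_div_cos, sin_two_mul, cos_two_mul]
  rcases eq_or_ne (cos y) 0 with hc | hc
  · simp [hc]
  · field_simp
    ring

theorem Real.tanh_le_self {x : ℝ} (hx : 0 ≤ x) : tanh x ≤ x := by
  rcases hx.eq_or_lt with rfl | hx
  · simp
  obtain ⟨ξ, hξ, hslope⟩ := exists_hasDerivAt_eq_slope sinh cosh hx continuous_sinh.continuousOn
    fun y _ => hasDerivAt_sinh y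
  have hcosh : cosh ξ ≤ cosh x := cosh_le_cosh.2 <| by
    rw [abs_of_pos hξ.1, abs_of_pos hx]; exact hξ.2.le
  rw [sinh_zero, sub_zero, sub_zero, eq_div_iff hx.ne'] at hslope
  rw [tanh_eq_sinh_div_cosh, div_le_iff₀ (cosh_pos x), ← hslope]
  nlinarith

theorem one_add_cos_sqrt_pos {x : ℝ} (hx : x < π ^ 2) : 0 < 1 + cos √x := by
  have h : cos π < cos √x :=
    cos_lt_cos_of_nonneg_of_le_pi (sqrt_nonneg x) le_rfl ((sqrt_lt' pi_pos).2 hx)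
  linarith [cos_pi]

noncomputable def fsNeg (Λ : ℝ) : ℝ := √(-Λ) * sinh √(-Λ) / (1 + cosh √(-Λ))

noncomputable def fsNeg' (Λ : ℝ) : ℝ :=
  -(sinh √(-Λ) + √(-Λ)) / (2 * √(-Λ) * (1 + cosh √(-Λ)))

noncomputable def fsNeg'' (Λ : ℝ) : ℝ :=
  ((1 + cosh √(-Λ)) * (√(-Λ) - sinh √(-Λ)) - √(-Λ) ^ 2 * sinh √(-Λ)) /
    (4 * √(-Λ) ^ 3 * (1 + cosh √(-Λ)) ^ 2)

theorem hasDerivAt_fsNeg {x : ℝ} (hx : x < 0) : HasDerivAt fsNeg (fsNeg' x) x := by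
  have hu := (hasDerivAt_neg x).sqrt (neg_ne_zero.2 hx.ne)
  have hu0 : 0 < √(-x) := sqrt_pos.2 (neg_pos.2 hx)
  have hC : 0 < 1 + cosh √(-x) := by positivity
  refine ((hu.mul hu.sinh).div (hu.cosh.const_add 1) hC.ne').congr_deriv ?_
  rw [fsNeg']
  simp only [Pi.mul_apply]
  field_simp
  linear_combination (-√(-x)) * cosh_sq √(-x)

theorem hasDerivAt_fsNeg' {x : ℝ} (hx : x < 0) : HasDerivAt fsNeg' (fsNeg'' x) x := by
  have hu := (hasDerivAt_neg x).sqrt (neg_ne_zero.2 hx.ne)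
  have hu0 : 0 < √(-x) := sqrt_pos.2 (neg_pos.2 hx)
  have hC : 0 < 1 + cosh √(-x) := by positivity
  refine ((hu.sinh.add hu).neg.div ((hu.const_mul 2).mul (hu.cosh.const_add 1))
    (by simp only [Pi.mul_apply]; positivity)).congr_deriv ?_
  rw [fsNeg'']
  simp only [Pi.mul_apply, Pi.add_apply, Pi.neg_apply]
  field_simp
  linear_combination 4 * √(-x) * cosh_sq √(-x)

theorem fsNeg''_nonpos (x : ℝ) : fsNeg'' x ≤ 0 := by
  have hu0 : 0 ≤ √(-x) := sqrt_nonneg _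
  have hS : √(-x) ≤ sinh √(-x) := self_le_sinh_iff.2 hu0
  refine div_nonpos_of_nonpos_of_nonneg ?_ (by positivity)
  nlinarith [mul_nonneg (sq_nonneg √(-x)) (sinh_nonneg_iff.2 hu0), cosh_pos √(-x)]

theorem concaveOn_fsNeg : ConcaveOn ℝ (Iic 0) fsNeg := by
  refine concaveOn_of_hasDerivWithinAt2_nonpos (f' := fsNeg') (convex_Iic 0) ?_ (fun x hx => ?_)
    (fun x hx => ?_) (fun x _ => fsNeg''_nonpos x)
  · have hu : Continuous fun Λ : ℝ => √(-Λ) := by fun_prop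
    exact ((hu.mul (continuous_sinh.comp hu)).div ((continuous_cosh.comp hu).const_add 1)
      fun Λ => (add_pos one_pos (cosh_pos _)).ne').continuousOn
  · rw [interior_Iic] at hx ⊢
    exact (hasDerivAt_fsNeg hx).hasDerivWithinAt
  · rw [interior_Iic] at hx ⊢
    exact (hasDerivAt_fsNeg' hx).hasDerivWithinAt

noncomputable def fsPos (Λ : ℝ) : ℝ := -(√Λ * sin √Λ / (1 + cos √Λ))

noncomputable def fsPos' (Λ : ℝ) : ℝ := -(sin √Λ + √Λ) / (2 * √Λ * (1 + cos √Λ))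

noncomputable def fsPos'' (Λ : ℝ) : ℝ :=
  -((1 + cos √Λ) * (√Λ - sin √Λ) + √Λ ^ 2 * sin √Λ) / (4 * √Λ ^ 3 * (1 + cos √Λ) ^ 2)

theorem hasDerivAt_fsPos {x : ℝ} (hx : 0 < x) (hx' : x < π ^ 2) :
    HasDerivAt fsPos (fsPos' x) x := by
  have hv := (hasDerivAt_id x).sqrt hx.ne'
  have hv0 : 0 < √x := sqrt_pos.2 hx
  have hc := one_add_cos_sqrt_pos hx'
  refine ((hv.mul hv.sin).div (hv.cos.const_add 1) hc.ne').neg.congr_deriv ?_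
  rw [fsPos']
  simp only [Pi.mul_apply, id]
  field_simp
  linear_combination -√x * sin_sq_add_cos_sq √x

theorem hasDerivAt_fsPos' {x : ℝ} (hx : 0 < x) (hx' : x < π ^ 2) :
    HasDerivAt fsPos' (fsPos'' x) x := by
  have hv := (hasDerivAt_id x).sqrt hx.ne'
  have hv0 : 0 < √x := sqrt_pos.2 hx
  have hc := one_add_cos_sqrt_pos hx'
  refine ((hv.sin.add hv).neg.div ((hv.const_mul 2).mul (hv.cos.const_add 1))
    (by simp only [Pi.mul_apply]; positivity)).congr_deriv ?_
  rw [fsPos'']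
  simp only [Pi.mul_apply, Pi.add_apply, Pi.neg_apply, id]
  field_simp
  linear_combination -4 * √x * sin_sq_add_cos_sq √x

theorem fsPos''_nonpos {x : ℝ} (hx : x ≤ π ^ 2) : fsPos'' x ≤ 0 := by
  have hv0 : 0 ≤ √x := sqrt_nonneg x
  have hvπ : √x ≤ π := (sqrt_le_left pi_pos.le).2 hx
  have hs : 0 ≤ sin √x := sin_nonneg_of_nonneg_of_le_pi hv0 hvπ
  refine div_nonpos_of_nonpos_of_nonneg ?_ (by positivity)
  nlinarith [mul_nonneg (neg_le_iff_add_nonneg'.1 (neg_one_le_cos √x)) (sub_nonneg.2 (sin_le hv0)),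
    mul_nonneg (sq_nonneg √x) hs]

theorem concaveOn_fsPos : ConcaveOn ℝ (Ico 0 (π ^ 2)) fsPos := by
  refine concaveOn_of_hasDerivWithinAt2_nonpos (f' := fsPos') (f'' := fsPos'') (convex_Ico 0 _) ?_
    (fun x hx => ?_) (fun x hx => ?_) (fun x hx => fsPos''_nonpos (x := x) ?_)
  · have hv : Continuous fun Λ : ℝ => √Λ := by fun_prop
    exact ((hv.mul (continuous_sin.comp hv)).continuousOn.div
      ((continuous_cos.comp hv).const_add 1).continuousOn
      fun Λ hΛ => (one_add_cos_sqrt_pos hΛ.2).ne').neg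
  all_goals rw [interior_Ico] at hx
  · exact (hasDerivAt_fsPos hx.1 hx.2).hasDerivWithinAt
  · exact (hasDerivAt_fsPos' hx.1 hx.2).hasDerivWithinAt
  · exact hx.2.le

theorem fs_eqOn_fsNeg : EqOn fs fsNeg (Iic 0) := by
  intro Λ hΛ
  rcases (mem_Iic.1 hΛ).lt_or_eq with h | rfl
  · rw [fs, if_pos h, fsNeg, tanh_half, mul_div_assoc]
  · simp [fs, fsNeg]

theorem fs_eqOn_fsPos : EqOn fs fsPos (Ici 0) := by
  intro Λ hΛ
  rcases (mem_Ici.1 hΛ).lt_or_eq with h | rfl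
  · rw [fs, if_neg h.not_gt, if_neg h.ne', fsPos, tan_half]
    ring
  · simp [fs, fsPos]

theorem fs_le_neg_half {Λ : ℝ} (hΛ : Λ < π ^ 2) : fs Λ ≤ -Λ / 2 := by
  rcases lt_trichotomy Λ 0 with h | rfl | h
  · rw [fs, if_pos h]
    have hu := sqrt_nonneg (-Λ)
    have hsq := sq_sqrt (neg_nonneg.2 h.le)
    nlinarith [mul_le_mul_of_nonneg_left (tanh_le_self (div_nonneg hu zero_le_two)) hu]
  · simp [fs]
  · rw [fs, if_neg h.not_gt, if_neg h.ne']
    have hv := sqrt_nonneg Λ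
    have hsq := sq_sqrt h.le
    have hvπ : √Λ < π := (sqrt_lt' pi_pos).2 hΛ
    nlinarith [mul_le_mul_of_nonneg_left (le_tan (div_nonneg hv zero_le_two) (by linarith)) hv]

/-- The principal Dirichlet-to-Neumann eigenvalue branch `fs` of the unit interval is
concave on `(-∞, π²)`. -/
theorem stmt11 (Λ₁ Λ₂ : ℝ) (h1 : Λ₁ < Real.pi ^ 2) (h2 : Λ₂ < Real.pi ^ 2)
    (t : ℝ) (ht : t ∈ Set.Icc (0 : ℝ) 1) :
    fs (t * Λ₁ + (1 - t) * Λ₂) ≥ t * fs Λ₁ + (1 - t) * fs Λ₂ := by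
  have hl : ConcaveOn ℝ (Iio (π ^ 2) ∩ Iic 0) fs :=
    (concaveOn_fsNeg.congr fs_eqOn_fsNeg.symm).subset inter_subset_right
      ((convex_Iio _).inter (convex_Iic 0))
  have hr : ConcaveOn ℝ (Iio (π ^ 2) ∩ Ici 0) fs :=
    (concaveOn_fsPos.congr (fs_eqOn_fsPos.mono Ico_subset_Ici_self).symm).subset
      (fun Λ hΛ => ⟨hΛ.2, hΛ.1⟩) ((convex_Iio _).inter (convex_Ici 0))
  have htangent : ∀ Λ ∈ Iio (π ^ 2), fs Λ ≤ fs 0 + -(1 / 2) * (Λ - 0) := fun Λ hΛ => by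
    rw [show fs 0 = 0 by simp [fs]]
    linarith [fs_le_neg_half hΛ]
  have hconc := ConcaveOn.of_inter_Iic_of_inter_Ici (convex_Iio _) hl hr htangent
  simpa only [smul_eq_mul] using hconc.2 h1 h2 ht.1 (sub_nonneg.2 ht.2) (add_sub_cancel t 1)
end
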